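/- arXiv:2605.30300 — 2 statements merged into one kernel-verified Lean document; each statement's English description precedes it below -/
import Mathlib

section
/- Chevalley restriction for degree-3 symmetric tensors: the restriction map from O(n)-invariant symmetric trilinear forms on Sym(n,ℝ) to 𝔖ₙ-invariant symmetric trilinear forms on the diagonal subspace D (where 𝔖ₙ acts by permuting diagonal entries) is a linear isomorphism. -/
open Matrix

/-- The submodule of symmetric `n × n` real matrices. -/
def symSubmodule (n : ℕ) : Submodule ℝ (Matrix (Fin n) (Fin n) ℝ) where
  carrier := {X | X.IsSymm}
  add_mem' := fun ha hb => ha.add hb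
  zero_mem' := by simp [Matrix.IsSymm]
  smul_mem' := fun c X hX => hX.smul c

/-- The type of symmetric `n × n` real matrices `Sym(n,ℝ)`. -/
abbrev SymMat (n : ℕ) := ↥(symSubmodule n)

/-- A map `V → V → V → ℝ` is a symmetric trilinear form if it is linear in the
first argument and fully symmetric. -/
def IsSymTrilinear {V : Type*} [AddCommGroup V] [Module ℝ V]
    (C : V → V → V → ℝ) : Prop :=
  (∀ y z : V, IsLinearMap ℝ fun x => C x y z) ∧
  (∀ x y z : V, C x y z = C y x z) ∧
  (∀ x y z : V, C x y z = C x z y)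

/-- Conjugation `X ↦ A X Aᵀ` of a symmetric matrix is symmetric. -/
theorem conj_isSymm {n : ℕ} (A : Matrix (Fin n) (Fin n) ℝ)
    (X : SymMat n) : (A * (X : Matrix (Fin n) (Fin n) ℝ) * Aᵀ).IsSymm := by
  have hX : (X : Matrix (Fin n) (Fin n) ℝ)ᵀ = (X : Matrix (Fin n) (Fin n) ℝ) := X.2
  unfold Matrix.IsSymm
  rw [Matrix.transpose_mul, Matrix.transpose_mul, Matrix.transpose_transpose,
    hX, Matrix.mul_assoc]

/-- The action of a matrix `A` on `Sym(n,ℝ)` by `X ↦ A X Aᵀ`. -/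
def conjS {n : ℕ} (A : Matrix (Fin n) (Fin n) ℝ) (X : SymMat n) : SymMat n :=
  ⟨A * (X : Matrix (Fin n) (Fin n) ℝ) * Aᵀ, conj_isSymm A X⟩

/-- `O(n)`-invariance of a trilinear form on `Sym(n,ℝ)`. -/
def IsOInvariant {n : ℕ} (C : SymMat n → SymMat n → SymMat n → ℝ) : Prop :=
  ∀ A : Matrix (Fin n) (Fin n) ℝ, A * Aᵀ = 1 →
    ∀ X Y Z : SymMat n, C (conjS A X) (conjS A Y) (conjS A Z) = C X Y Z

/-- A diagonal matrix, as an element of `Sym(n,ℝ)`. -/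
def diagSym {n : ℕ} (a : Fin n → ℝ) : SymMat n :=
  ⟨Matrix.diagonal a, Matrix.isSymm_diagonal a⟩

/-- `𝔖ₙ`-invariance of a trilinear form on the diagonal subspace `D ≅ ℝⁿ`. -/
def IsPermInvariant {n : ℕ} (C : (Fin n → ℝ) → (Fin n → ℝ) → (Fin n → ℝ) → ℝ) :
    Prop :=
  ∀ σ : Equiv.Perm (Fin n), ∀ a b c : Fin n → ℝ,
    C (a ∘ σ) (b ∘ σ) (c ∘ σ) = C a b c

/-!
Restriction to `D` is injective: a symmetric trilinear form is determined by its cubic form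
`X ↦ C(X,X,X)` (polarization), and by the spectral theorem every symmetric matrix is
orthogonally conjugate to a diagonal one, so two `O(n)`-invariant forms that agree on `D` have
the same cubic form.

Restriction is surjective: a `𝔖ₙ`-invariant symmetric trilinear form on `ℝⁿ` is determined by
its values on the basis triples `(e_i,e_i,e_i)`, `(e_i,e_i,e_k)`, `(e_i,e_j,e_k)` with distinct
indices, and a combination of the `O(n)`-invariants `tr(XYZ)`,
`tr(XY) tr Z + tr(YZ) tr X + tr(ZX) tr Y` and `tr X tr Y tr Z` takes any three prescribed values
there.
-/

theorem IsLinearMap.ext_single {ι : Type*} [Finite ι] [DecidableEq ι]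
    {f g : (ι → ℝ) → ℝ} (hf : IsLinearMap ℝ f) (hg : IsLinearMap ℝ g)
    (h : ∀ i, f (Pi.single i 1) = g (Pi.single i 1)) : f = g :=
  congrArg DFunLike.coe <| (Pi.basisFun ℝ ι).ext (f₁ := hf.mk' f) (f₂ := hg.mk' g) fun i => by
    simpa using h i

namespace IsSymTrilinear

variable {V W : Type*} [AddCommGroup V] [Module ℝ V] [AddCommGroup W] [Module ℝ W]
  {C D : V → V → V → ℝ}

theorem isLinearMap_snd (h : IsSymTrilinear C) (x z : V) :
    IsLinearMap ℝ fun y => C x y z := by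
  simpa only [h.2.1 x] using h.1 x z

theorem isLinearMap_thd (h : IsSymTrilinear C) (x y : V) :
    IsLinearMap ℝ fun z => C x y z := by
  simpa only [h.2.2 x y] using h.isLinearMap_snd x y

theorem sub (hC : IsSymTrilinear C) (hD : IsSymTrilinear D) :
    IsSymTrilinear fun x y z => C x y z - D x y z :=
  ⟨fun y z => ⟨fun p q => by simp only [(hC.1 y z).map_add, (hD.1 y z).map_add]; ring,
    fun r p => by simp only [(hC.1 y z).map_smul, (hD.1 y z).map_smul, smul_eq_mul]; ring⟩,
   fun x y z => congrArg₂ (· - ·) (hC.2.1 x y z) (hD.2.1 x y z),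
   fun x y z => congrArg₂ (· - ·) (hC.2.2 x y z) (hD.2.2 x y z)⟩

theorem comp (h : IsSymTrilinear C) {f : W → V} (hf : IsLinearMap ℝ f) :
    IsSymTrilinear fun x y z => C (f x) (f y) (f z) :=
  ⟨fun y z => (((h.1 (f y) (f z)).mk' _).comp (hf.mk' f)).isLinear,
    fun _ _ _ => h.2.1 _ _ _, fun _ _ _ => h.2.2 _ _ _⟩

theorem apply_add_add_add (h : IsSymTrilinear C) (u v : V) :
    C (u + v) (u + v) (u + v) = C u u u + 3 * C u u v + 3 * C u v v + C v v v := by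
  simp only [(h.1 _ _).map_add, (h.isLinearMap_snd _ _).map_add,
    (h.isLinearMap_thd _ _).map_add]
  rw [h.2.2 u v u, h.2.1 v u u, h.2.2 u v u, h.2.1 v u v, h.2.2 v v u, h.2.1 v u v]
  ring

theorem apply_eq_zero_of_apply_self (h : IsSymTrilinear C) (h0 : ∀ x, C x x x = 0)
    (x y z : V) : C x y z = 0 := by
  have hsq : ∀ u w, C u w w = 0 := fun u w => by
    -- adding the expansions of `(u + w)³` and `(u - w)³` leaves `2 C(u,u,u) + 6 C(u,w,w)`
    have hplus := h.apply_add_add_add u w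
    have hminus := h.apply_add_add_add u (-w)
    simp only [(h.isLinearMap_snd _ _).map_neg, (h.isLinearMap_thd _ _).map_neg,
      (h.1 _ _).map_neg, neg_neg, h0] at hplus hminus
    linarith
  have hyz := hsq x (y + z)
  simp only [(h.isLinearMap_snd _ _).map_add, (h.isLinearMap_thd _ _).map_add, hsq,
    h.2.2 x z y] at hyz
  linarith

theorem eq_of_apply_self_eq (hC : IsSymTrilinear C) (hD : IsSymTrilinear D)
    (h : ∀ x, C x x x = D x x x) : C = D := by
  funext x y z
  exact sub_eq_zero.mp <|
    (hC.sub hD).apply_eq_zero_of_apply_self (fun x => sub_eq_zero.mpr (h x)) x y z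

theorem ext_single {ι : Type*} [Finite ι] [DecidableEq ι]
    {C D : (ι → ℝ) → (ι → ℝ) → (ι → ℝ) → ℝ} (hC : IsSymTrilinear C) (hD : IsSymTrilinear D)
    (h : ∀ i j k, C (Pi.single i 1) (Pi.single j 1) (Pi.single k 1) =
      D (Pi.single i 1) (Pi.single j 1) (Pi.single k 1)) : C = D := by
  have h₃ : ∀ i j, C (Pi.single i 1) (Pi.single j 1) = D (Pi.single i 1) (Pi.single j 1) :=
    fun i j => (hC.isLinearMap_thd _ _).ext_single (hD.isLinearMap_thd _ _) (h i j)
  have h₂ : ∀ i c, (C (Pi.single i 1) · c) = (D (Pi.single i 1) · c) := fun i c =>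
    (hC.isLinearMap_snd _ _).ext_single (hD.isLinearMap_snd _ _) fun j => congrFun (h₃ i j) c
  funext a b c
  exact congrFun ((hC.1 b c).ext_single (hD.1 b c) fun i => congrFun (h₂ i c) b) a

end IsSymTrilinear

section TraceForm

variable {n : ℕ}

theorem Matrix.trace_mul_mul_swap_of_isSymm {P Q R : Matrix (Fin n) (Fin n) ℝ}
    (hP : P.IsSymm) (hQ : Q.IsSymm) (hR : R.IsSymm) :
    (Q * P * R).trace = (P * Q * R).trace := by
  rw [trace_mul_cycle, ← trace_transpose, transpose_mul, transpose_mul, hP.eq, hQ.eq, hR.eq,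
    Matrix.mul_assoc]

theorem conj_mul_conj {A : Matrix (Fin n) (Fin n) ℝ} (hA : Aᵀ * A = 1)
    (M N : Matrix (Fin n) (Fin n) ℝ) : A * M * Aᵀ * (A * N * Aᵀ) = A * (M * N) * Aᵀ := by
  simp only [Matrix.mul_assoc, ← Matrix.mul_assoc Aᵀ A, hA, Matrix.one_mul]

theorem trace_conj {A : Matrix (Fin n) (Fin n) ℝ} (hA : Aᵀ * A = 1)
    (M : Matrix (Fin n) (Fin n) ℝ) : (A * M * Aᵀ).trace = M.trace := by
  rw [Matrix.trace_mul_cycle, hA, Matrix.one_mul]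

noncomputable def traceForm (α β γ : ℝ) (X Y Z : SymMat n) : ℝ :=
  let X : Matrix (Fin n) (Fin n) ℝ := X
  let Y : Matrix (Fin n) (Fin n) ℝ := Y
  let Z : Matrix (Fin n) (Fin n) ℝ := Z
  α * (X * Y * Z).trace + β * ((X * Y).trace * Z.trace + (Y * Z).trace * X.trace +
    (Z * X).trace * Y.trace) + γ * (X.trace * Y.trace * Z.trace)

theorem traceForm_isSymTrilinear (α β γ : ℝ) : IsSymTrilinear (traceForm (n := n) α β γ) := by
  refine ⟨fun Y Z => ⟨fun X X' => ?_, fun c X => ?_⟩, fun X Y Z => ?_, fun X Y Z => ?_⟩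
  · simp only [traceForm, Submodule.coe_add, Matrix.add_mul, Matrix.mul_add, Matrix.trace_add]
    ring
  · simp only [traceForm, SetLike.val_smul, Matrix.smul_mul, Matrix.mul_smul,
      Matrix.trace_smul, smul_eq_mul]
    ring
  · simp only [traceForm]
    rw [Matrix.trace_mul_mul_swap_of_isSymm X.2 Y.2 Z.2,
      Matrix.trace_mul_comm (Y : Matrix (Fin n) (Fin n) ℝ) X,
      Matrix.trace_mul_comm (X : Matrix (Fin n) (Fin n) ℝ) Z,
      Matrix.trace_mul_comm (Z : Matrix (Fin n) (Fin n) ℝ) Y]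
    ring
  · rw [traceForm, traceForm, Matrix.trace_mul_cycle,
      Matrix.trace_mul_mul_swap_of_isSymm Z.2 X.2 Y.2,
      Matrix.trace_mul_comm (X : Matrix (Fin n) (Fin n) ℝ) Z,
      Matrix.trace_mul_comm (Z : Matrix (Fin n) (Fin n) ℝ) Y,
      Matrix.trace_mul_comm (Y : Matrix (Fin n) (Fin n) ℝ) X]
    ring

theorem traceForm_isOInvariant (α β γ : ℝ) : IsOInvariant (traceForm (n := n) α β γ) := by
  intro A hA X Y Z
  have hA' : Aᵀ * A = 1 := mul_eq_one_comm.mp hA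
  simp only [traceForm, conjS, conj_mul_conj hA', trace_conj hA']

theorem traceForm_diagSym_single (α β γ : ℝ) (i j k : Fin n) :
    traceForm α β γ (diagSym (Pi.single i 1)) (diagSym (Pi.single j 1))
        (diagSym (Pi.single k 1)) =
      α * (if i = j ∧ j = k then 1 else 0) +
        β * ((if i = j then 1 else 0) + (if j = k then 1 else 0) + (if k = i then 1 else 0)) +
        γ := by
  simp only [traceForm, diagSym, diagonal_mul_diagonal, Pi.single_apply, mul_ite, mul_one,
    mul_zero, trace_diagonal, Finset.sum_ite_eq', Finset.mem_univ, ↓reduceIte, add_left_inj]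
  split_ifs <;> grind

end TraceForm

section Restriction

variable {n : ℕ}

theorem exists_conjS_diagSym (X : SymMat n) :
    ∃ (A : Matrix (Fin n) (Fin n) ℝ) (d : Fin n → ℝ),
      A * Aᵀ = 1 ∧ X = conjS A (diagSym d) := by
  have hX : (X : Matrix (Fin n) (Fin n) ℝ).IsHermitian := by
    rw [Matrix.IsHermitian, Matrix.conjTranspose_eq_transpose_of_trivial]
    exact X.2
  refine ⟨hX.eigenvectorUnitary, hX.eigenvalues, ?_, ?_⟩
  · simpa [Matrix.star_eq_conjTranspose] using
      (Matrix.mem_unitaryGroup_iff).mp hX.eigenvectorUnitary.2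
  · refine Subtype.ext (?_ : (X : Matrix (Fin n) (Fin n) ℝ) = _ * Matrix.diagonal _ * _ᵀ)
    simpa [Unitary.conjStarAlgAut_apply, Matrix.star_eq_conjTranspose] using
      hX.spectral_theorem

theorem eq_of_diagSym_eq {C D : SymMat n → SymMat n → SymMat n → ℝ}
    (hC : IsSymTrilinear C) (hD : IsSymTrilinear D) (hCinv : IsOInvariant C)
    (hDinv : IsOInvariant D)
    (h : ∀ a b c,
      C (diagSym a) (diagSym b) (diagSym c) = D (diagSym a) (diagSym b) (diagSym c)) :
    C = D := by
  refine hC.eq_of_apply_self_eq hD fun X => ?_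
  obtain ⟨A, d, hA, rfl⟩ := exists_conjS_diagSym X
  rw [hCinv A hA, hDinv A hA, h]

theorem isLinearMap_diagSym : IsLinearMap ℝ (diagSym (n := n)) :=
  ⟨fun a b => Subtype.ext (Matrix.diagonal_add a b).symm,
    fun r a => Subtype.ext (Matrix.diagonal_smul r a)⟩

end Restriction

section PermInvariant

variable {n : ℕ} {C : (Fin n → ℝ) → (Fin n → ℝ) → (Fin n → ℝ) → ℝ}

/-- `C (e_i) (e_j) (e_k)`, with the junk value `0` when an index is `≥ n`. -/
noncomputable def basisCoeff (C : (Fin n → ℝ) → (Fin n → ℝ) → (Fin n → ℝ) → ℝ) (i j k : ℕ) :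
    ℝ :=
  if h : i < n ∧ j < n ∧ k < n then
    C (Pi.single ⟨i, h.1⟩ 1) (Pi.single ⟨j, h.2.1⟩ 1) (Pi.single ⟨k, h.2.2⟩ 1)
  else 0

theorem IsPermInvariant.apply_single_perm (h : IsPermInvariant C) (σ : Equiv.Perm (Fin n))
    (i j k : Fin n) :
    C (Pi.single (σ i) 1) (Pi.single (σ j) 1) (Pi.single (σ k) 1) =
      C (Pi.single i 1) (Pi.single j 1) (Pi.single k 1) := by
  simpa only [Pi.single_comp_equiv, Equiv.symm_apply_apply] using
    (h σ (Pi.single (σ i) 1) (Pi.single (σ j) 1) (Pi.single (σ k) 1)).symm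

theorem IsPermInvariant.apply_single_eq_basisCoeff (h : IsPermInvariant C) {m : ℕ}
    {u : Fin m → Fin n} (hu : u.Injective) (p q r : Fin m) :
    C (Pi.single (u p) 1) (Pi.single (u q) 1) (Pi.single (u r) 1) = basisCoeff C p q r := by
  have hmn : m ≤ n := Fin.le_of_injective u hu
  obtain ⟨σ, hσ⟩ := Equiv.Perm.exists_extending_pair _ u (Fin.castLE_injective hmn) hu
  rw [basisCoeff, dif_pos ⟨p.2.trans_le hmn, q.2.trans_le hmn, r.2.trans_le hmn⟩, ← hσ, ← hσ,
    ← hσ, h.apply_single_perm]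
  rfl

theorem IsPermInvariant.exists_traceForm_diagSym_eq (hCinv : IsPermInvariant C)
    (hC : IsSymTrilinear C) :
    ∃ α β γ : ℝ, ∀ a b c, traceForm α β γ (diagSym a) (diagSym b) (diagSym c) = C a b c := by
  set A := basisCoeff C 0 0 0
  set B := basisCoeff C 0 0 1
  set Γ := basisCoeff C 0 1 2
  have hA (i : Fin n) : C (Pi.single i 1) (Pi.single i 1) (Pi.single i 1) = A :=
    hCinv.apply_single_eq_basisCoeff (u := ![i]) (Function.injective_of_subsingleton _) 0 0 0
  have hB {i k : Fin n} (hik : i ≠ k) : C (Pi.single i 1) (Pi.single i 1) (Pi.single k 1) = B :=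
    hCinv.apply_single_eq_basisCoeff (u := ![i, k])
      (by simp [Function.Injective, Fin.forall_fin_two, hik, hik.symm]) 0 0 1
  have hΓ {i j k : Fin n} (hij : i ≠ j) (hik : i ≠ k) (hjk : j ≠ k) :
      C (Pi.single i 1) (Pi.single j 1) (Pi.single k 1) = Γ :=
    hCinv.apply_single_eq_basisCoeff (u := ![i, j, k])
      (by simp [Function.Injective, Fin.forall_fin_succ, *, Ne.symm]) 0 1 2
  -- solves `α + 3β + γ = A`, `β + γ = B`, `γ = Γ` (see `traceForm_diagSym_single`)
  have hrestrict : (fun a b c => traceForm (A - 3 * B + 2 * Γ) (B - Γ) Γ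
      (diagSym a) (diagSym b) (diagSym c)) = C := by
    refine ((traceForm_isSymTrilinear _ _ _).comp isLinearMap_diagSym).ext_single hC
      fun i j k => ?_
    simp only [traceForm_diagSym_single]
    rcases eq_or_ne i j with rfl | hij
    · rcases eq_or_ne i k with rfl | hik
      · simp only [and_self, if_true, hA]
        ring
      · simp [hik, hik.symm, hB hik]
    rcases eq_or_ne j k with rfl | hjk
    · rw [hC.2.1, hC.2.2, hB hij.symm]
      simp [hij, hij.symm]
    rcases eq_or_ne i k with rfl | hik
    · rw [hC.2.2, hB hij]
      simp [hij, hjk]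
    · simp [hij, hjk, hik.symm, hΓ hij hik hjk]
  exact ⟨_, _, _, fun a b c => congr_fun₃ hrestrict a b c⟩

end PermInvariant

/-- Chevalley restriction in degree 3: restriction to the diagonal subspace is
a linear isomorphism from `O(n)`-invariant symmetric trilinear forms on
`Sym(n,ℝ)` onto `𝔖ₙ`-invariant symmetric trilinear forms on `D ≅ ℝⁿ`;
equivalently, every invariant symmetric trilinear form downstairs is the
restriction of a unique invariant symmetric trilinear form upstairs. -/
theorem stmt_10 (n : ℕ)
    (C' : (Fin n → ℝ) → (Fin n → ℝ) → (Fin n → ℝ) → ℝ)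
    (hC'tri : IsSymTrilinear C') (hC'inv : IsPermInvariant C') :
    ∃! C : {C : SymMat n → SymMat n → SymMat n → ℝ //
              IsSymTrilinear C ∧ IsOInvariant C},
      ∀ a b c : Fin n → ℝ, (C : SymMat n → SymMat n → SymMat n → ℝ)
        (diagSym a) (diagSym b) (diagSym c) = C' a b c := by
  obtain ⟨α, β, γ, hrestrict⟩ := hC'inv.exists_traceForm_diagSym_eq hC'tri
  refine ⟨⟨traceForm α β γ, traceForm_isSymTrilinear α β γ, traceForm_isOInvariant α β γ⟩,
    hrestrict, ?_⟩
  rintro ⟨C, hCtri, hCinv⟩ hC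
  exact Subtype.ext <| eq_of_diagSym_eq hCtri (traceForm_isSymTrilinear α β γ) hCinv
    (traceForm_isOInvariant α β γ) fun a b c => (hC a b c).trans (hrestrict a b c).symm
end

section
/- For any integer n ≥ 3, the system of real equations 0 = −2 + 2a₁² + (8/3)a₁(2a₂+3a₃) + (8/9)a₂(a₂(n+1) + 3a₃n), 0 = (8/9)(6a₁a₂ + a₂² + 9a₁a₃ + a₂(a₂+3a₃)n), 0 = −1 + a₁² + (16/3)a₁a₂ + (8/9)a₂²n has exactly the four solutions (a₁,a₂,a₃) = (1,0,0), (−1,0,0), (1, −6/n, 4/n²), (−1, 6/n, −4/n²). -/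
set_option maxHeartbeats 1000000 in
/-- For integer `n ≥ 3`, the curvature-vanishing system has exactly the four
solutions `(1,0,0)`, `(−1,0,0)`, `(1,−6/n,4/n²)`, `(−1,6/n,−4/n²)`. -/
theorem stmt_17 (n : ℕ) (hn : 3 ≤ n) (a₁ a₂ a₃ : ℝ) :
    ((0 : ℝ) = -2 + 2 * a₁ ^ 2 + (8 / 3) * a₁ * (2 * a₂ + 3 * a₃) +
        (8 / 9) * a₂ * (a₂ * ((n : ℝ) + 1) + 3 * a₃ * (n : ℝ)) ∧
      (0 : ℝ) = (8 / 9) * (6 * a₁ * a₂ + a₂ ^ 2 + 9 * a₁ * a₃ +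
        a₂ * (a₂ + 3 * a₃) * (n : ℝ)) ∧
      (0 : ℝ) = -1 + a₁ ^ 2 + (16 / 3) * a₁ * a₂ + (8 / 9) * a₂ ^ 2 * (n : ℝ)) ↔
    ((a₁, a₂, a₃) = ((1 : ℝ), (0 : ℝ), (0 : ℝ)) ∨
      (a₁, a₂, a₃) = ((-1 : ℝ), (0 : ℝ), (0 : ℝ)) ∨
      (a₁, a₂, a₃) = ((1 : ℝ), -6 / (n : ℝ), 4 / (n : ℝ) ^ 2) ∨
      (a₁, a₂, a₃) = ((-1 : ℝ), 6 / (n : ℝ), -4 / (n : ℝ) ^ 2)) := by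
  have hN : (3 : ℝ) ≤ (n : ℝ) := by exact_mod_cast hn
  have hN0 : (n : ℝ) ≠ 0 := by linarith
  set N : ℝ := (n : ℝ) with hNdef
  simp only [Prod.mk.injEq]
  constructor
  · rintro ⟨h1, h2, h3⟩
    have key : a₂ * (6 * a₁ + a₂ * N) = 0 := by
      linear_combination -(9/16) * h2 + (9/16) * h1 - (9/8) * h3
    rcases mul_eq_zero.mp key with h20 | hk
    · -- a₂ = 0
      subst h20
      have hsq : (a₁ - 1) * (a₁ + 1) = 0 := by linear_combination -h3
      have haa : a₁ * a₃ = 0 := by linear_combination -(1/8) * h2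
      rcases mul_eq_zero.mp hsq with h | h
      · have ha1 : a₁ = 1 := by linarith
        have ha3 : a₃ = 0 := by rw [ha1] at haa; linarith
        exact Or.inl ⟨ha1, rfl, ha3⟩
      · have ha1 : a₁ = -1 := by linarith
        have ha3 : a₃ = 0 := by rw [ha1] at haa; linarith
        exact Or.inr (Or.inl ⟨ha1, rfl, ha3⟩)
    · -- 6a₁ + a₂ N = 0
      have hsq : (a₁ - 1) * (a₁ + 1) = 0 := by
        linear_combination -h3 - (8/9) * a₂ * hk
      rcases mul_eq_zero.mp hsq with h | h
      · have ha1 : a₁ = 1 := by linarith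
        have ha2 : a₂ = -6 / N := by
          rw [ha1] at hk; field_simp; linarith
        have ha3 : a₃ = 4 / N ^ 2 := by
          rw [ha1, ha2] at h2
          field_simp at h2 ⊢
          nlinarith [h2, sq_nonneg N]
        exact Or.inr (Or.inr (Or.inl ⟨ha1, ha2, ha3⟩))
      · have ha1 : a₁ = -1 := by linarith
        have ha2 : a₂ = 6 / N := by
          rw [ha1] at hk; field_simp; linarith
        have ha3 : a₃ = -4 / N ^ 2 := by
          rw [ha1, ha2] at h2
          field_simp at h2 ⊢
          nlinarith [h2, sq_nonneg N]
        exact Or.inr (Or.inr (Or.inr ⟨ha1, ha2, ha3⟩))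
  · rintro (⟨rfl, rfl, rfl⟩ | ⟨rfl, rfl, rfl⟩ | ⟨rfl, rfl, rfl⟩ | ⟨rfl, rfl, rfl⟩) <;>
      refine ⟨?_, ?_, ?_⟩ <;> field_simp <;> ring
end
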